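/- Let X and Y be integral schemes of finite type over ℂ (or more generally, normal varieties over a field of characteristic zero) and f : X → Y a finite surjective morphism with Y normal. Then the natural map O_Y → f_*O_X admits an O_Y-module retraction given by (1/deg f)·Trace_{X/Y}; in particular, f_*O_X ≅ O_Y ⊕ F as O_Y-modules for some O_Y-module F. -/

import Mathlib

/-!
For a finite dominant morphism `f : X ⟶ Y` of integral schemes, `K(X)/K(Y)` is a finite field
extension, and in characteristic zero the normalized trace `(1 / [K(X) : K(Y)]) • Tr` is a
`K(Y)`-linear retraction of `K(Y) → K(X)`. A section `b` of `f_* O_X` over `U` has a germ in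
`K(X)` that is integral over every local ring `O_{Y,y}`, `y ∈ U`; its normalized trace is then
integral over `O_{Y,y}` and lies in `K(Y)`, hence in `O_{Y,y}` by normality (the degree is
invertible because `ℚ ⊆ O_{Y,y}`). Sections of `O_Y` over `U` are exactly the rational functions
regular at every point of `U`, so the normalized trace of `b` is a section over `U`. Linearity, the
retraction property and compatibility with restriction may all be checked in `K(Y)`, into which the
sections over nonempty opens inject.
-/

open AlgebraicGeometry CategoryTheory Opposite TopologicalSpace Module
open scoped nonZeroDivisors

theorem Algebra.exists_algebraMap_eq_normalizedTrace {R K L : Type*} [CommRing R] [IsDomain R]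
    [IsIntegrallyClosed R] [Algebra ℚ R] [Field K] [CharZero K] [Algebra R K] [IsFractionRing R K]
    [Field L] [Algebra K L] [Algebra R L] [IsScalarTower R K L] [FiniteDimensional K L] {x : L}
    (hx : IsIntegral R x) : ∃ c : R, algebraMap R K c = normalizedTrace K L x := by
  obtain ⟨c, hc⟩ := IsIntegrallyClosed.isIntegral_iff.mp (isIntegral_trace (L := K) hx)
  obtain ⟨u, hu⟩ : IsUnit (finrank K L : R) := by
    simpa using (Nat.cast_ne_zero.mpr finrank_pos.ne' : (finrank K L : ℚ) ≠ 0).isUnit.map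
      (algebraMap ℚ R)
  refine ⟨↑u⁻¹ * c, ?_⟩
  rw [map_mul, hc, map_units_inv, hu, map_natCast,
    normalizedTrace_eq_of_finiteDimensional_apply, smul_eq_mul]

theorem DenseRange.map_genericPoint {α β : Type*} [TopologicalSpace α] [TopologicalSpace β]
    [QuasiSober α] [IrreducibleSpace α] [QuasiSober β] [IrreducibleSpace β] [T0Space β]
    {f : α → β} (hf : Continuous f) (hd : DenseRange f) :
    f (genericPoint α) = genericPoint β := by
  refine ((genericPoint_spec β).eq ?_).symm
  simpa [hd.closure_range] using (genericPoint_spec α).image hf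

namespace AlgebraicGeometry

universe u

variable {X Y : Scheme.{u}}

namespace Scheme

theorem germToFunctionField_map [IrreducibleSpace Y] {U V : Y.Opens} [Nonempty U] [Nonempty V]
    (i : V ⟶ U) (s : Γ(Y, U)) :
    Y.germToFunctionField V (Y.presheaf.map i.op s) = Y.germToFunctionField U s :=
  Y.presheaf.germ_res_apply _ _ _ _

theorem eq_of_germToFunctionField_eq [IsIntegral Y] {U : Y.Opens} {s t : Γ(Y, U)}
    (h : ∀ [Nonempty U], Y.germToFunctionField U s = Y.germToFunctionField U t) : s = t := by
  by_cases hU : Nonempty U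
  · exact Y.germToFunctionField_injective U h
  · obtain rfl : U = ⊥ := (Opens.not_nonempty_iff_eq_bot U).mp (by simpa using hU)
    exact Subsingleton.elim s t

theorem exists_germToFunctionField_eq_of_forall_mem_range [IsIntegral Y] (U : Y.Opens) [Nonempty U]
    (t : Y.functionField)
    (ht : ∀ y ∈ U, t ∈ (algebraMap (Y.presheaf.stalk y) Y.functionField).range) :
    ∃ s : Γ(Y, U), Y.germToFunctionField U s = t := by
  have local_section (y : U) : ∃ W ≤ U, ∃ (_ : y.1 ∈ W) (s : Γ(Y, W)),
      ∀ [Nonempty W], Y.germToFunctionField W s = t := by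
    obtain ⟨c, hc⟩ := ht y y.2
    obtain ⟨W, hWU, hyW, s, hs⟩ := Y.presheaf.exists_le_germ_eq c y.2
    refine ⟨W, hWU, hyW, s, fun {_} ↦ ?_⟩
    rw [← algebraMap_germ_eq_germToFunctionField _ hyW, hs, hc]
  choose W hWU hyW s hs using local_section
  have (y : U) : Nonempty (W y) := ⟨⟨y, hyW y⟩⟩
  have compatible : TopCat.Presheaf.IsCompatible Y.presheaf W s := fun y z ↦
    eq_of_germToFunctionField_eq <| by
      intro
      rw [germToFunctionField_map, germToFunctionField_map, hs, hs]
  obtain ⟨s', hs', -⟩ :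
      ∃! s' : Γ(Y, U), ∀ y, Y.presheaf.map (homOfLE (hWU y)).op s' = s y :=
    Y.sheaf.existsUnique_gluing' W U (fun y ↦ homOfLE (hWU y))
      (fun y hy ↦ Opens.mem_iSup.mpr ⟨⟨y, hy⟩, hyW _⟩) s compatible
  obtain ⟨y, hy⟩ := ‹Nonempty U›
  exact ⟨s', by rw [← germToFunctionField_map (homOfLE (hWU ⟨y, hy⟩)), hs', hs]⟩

end Scheme

namespace Scheme.Hom

variable (f : X ⟶ Y)

instance nonempty_preimage [IsDominant f] (U : Y.Opens) [Nonempty U] : Nonempty (f ⁻¹ᵁ U) := by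
  obtain ⟨x, hx⟩ := f.denseRange.exists_mem_open U.isOpen (by simpa using ‹Nonempty U›)
  exact ⟨x, hx⟩

theorem apply_genericPoint [IrreducibleSpace X] [IrreducibleSpace Y] [IsDominant f] :
    f (genericPoint X) = genericPoint Y :=
  f.denseRange.map_genericPoint f.continuous

noncomputable def functionFieldMap [IrreducibleSpace X] [IrreducibleSpace Y] [IsDominant f] :
    Y.functionField ⟶ X.functionField :=
  Y.presheaf.stalkSpecializes (specializes_of_eq f.apply_genericPoint) ≫
    f.stalkMap (genericPoint X)

theorem germToFunctionField_app [IrreducibleSpace X] [IrreducibleSpace Y] [IsDominant f]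
    (U : Y.Opens) [Nonempty U] (a : Γ(Y, U)) :
    X.germToFunctionField (f ⁻¹ᵁ U) (f.app U a) =
      f.functionFieldMap (Y.germToFunctionField U a) := by
  simp only [functionFieldMap, CommRingCat.comp_apply]
  rw [TopCat.Presheaf.germ_stalkSpecializes_apply, germ_stalkMap_apply]

theorem finite_functionFieldMap [IsIntegral X] [IsIntegral Y] [IsDominant f] [IsFinite f] :
    f.functionFieldMap.hom.Finite := by
  obtain ⟨y⟩ : Nonempty Y := inferInstance
  obtain ⟨_, ⟨V, hV, rfl⟩, hyV, -⟩ :=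
    Y.isBasis_affineOpens.exists_subset_of_mem_open (Set.mem_univ y) isOpen_univ
  have : Nonempty V := ⟨⟨y, hyV⟩⟩
  have := functionField_isFractionRing_of_isAffineOpen Y V hV
  have := functionField_isFractionRing_of_isAffineOpen X _ (hV.preimage f)
  have := IsSchemeTheoreticallyDominant.of_isDominant f
  algebraize [(f.app V).hom, f.functionFieldMap.hom]
  let : Algebra Γ(Y, V) X.functionField :=
    ((X.germToFunctionField (f ⁻¹ᵁ V)).hom.comp (f.app V).hom).toAlgebra
  have : IsScalarTower Γ(Y, V) Γ(X, f ⁻¹ᵁ V) X.functionField := .of_algebraMap_eq' rfl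
  have : IsScalarTower Γ(Y, V) Y.functionField X.functionField :=
    .of_algebraMap_eq fun a ↦ f.germToFunctionField_app V a
  have : FaithfulSMul Γ(Y, V) Γ(X, f ⁻¹ᵁ V) :=
    (faithfulSMul_iff_algebraMap_injective _ _).mpr (f.app_injective V)
  have : Module.Finite Γ(Y, V) Γ(X, f ⁻¹ᵁ V) := IsFinite.finite_app f V hV
  -- `Γ(X, f⁻¹V)` is integral over `Γ(Y, V)`, so its fraction field `K(X)` is already its
  -- localization at the nonzero elements of `Γ(Y, V)`.
  exact .of_isLocalization Γ(Y, V) Γ(X, f ⁻¹ᵁ V) Γ(Y, V)⁰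

section NormalizedTrace

variable [IsIntegral X] [IsIntegral Y] [IsDominant f] [IsFinite f]

theorem isIntegralElem_germToFunctionField {U : Y.Opens} [Nonempty U] {y : Y} (hy : y ∈ U)
    (b : Γ(X, f ⁻¹ᵁ U)) :
    (f.functionFieldMap.hom.comp (algebraMap (Y.presheaf.stalk y) Y.functionField)).IsIntegralElem
      (X.germToFunctionField (f ⁻¹ᵁ U) b) := by
  obtain ⟨_, ⟨V, hV, rfl⟩, hyV, hVU⟩ :=
    Y.isBasis_affineOpens.exists_subset_of_mem_open hy U.isOpen
  have : Nonempty V := ⟨⟨y, hyV⟩⟩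
  algebraize [(f.app V).hom]
  have : Module.Finite Γ(Y, V) Γ(X, f ⁻¹ᵁ V) := IsFinite.finite_app f V hV
  have hb : _root_.IsIntegral Γ(Y, V)
      (X.presheaf.map ((Opens.map f.base).map (homOfLE hVU)).op b : Γ(X, f ⁻¹ᵁ V)) :=
    .of_finite _ _
  let : Algebra (Y.presheaf.stalk y) X.functionField :=
    (f.functionFieldMap.hom.comp (algebraMap (Y.presheaf.stalk y) Y.functionField)).toAlgebra
  rw [← germToFunctionField_map ((Opens.map f.base).map (homOfLE hVU))]
  refine hb.map_of_comp_eq (Y.presheaf.germ V y hyV).hom (X.germToFunctionField _).hom ?_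
  ext a
  change f.functionFieldMap (algebraMap _ Y.functionField (Y.presheaf.germ V y hyV a)) =
    X.germToFunctionField (f ⁻¹ᵁ V) (f.app V a)
  rw [algebraMap_germ_eq_germToFunctionField, germToFunctionField_app]

variable [CharZero Y.functionField]

noncomputable def normalizedTrace : X.functionField →+ Y.functionField :=
  letI := f.functionFieldMap.hom.toAlgebra
  haveI : Module.Finite Y.functionField X.functionField := f.finite_functionFieldMap
  (Algebra.normalizedTrace Y.functionField X.functionField).toAddMonoidHom

theorem normalizedTrace_functionFieldMap_mul (a : Y.functionField) (b : X.functionField) :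
    f.normalizedTrace (f.functionFieldMap a * b) = a * f.normalizedTrace b :=
  letI := f.functionFieldMap.hom.toAlgebra
  haveI : Module.Finite Y.functionField X.functionField := f.finite_functionFieldMap
  (Algebra.normalizedTrace Y.functionField X.functionField).map_smul a b

theorem normalizedTrace_functionFieldMap (a : Y.functionField) :
    f.normalizedTrace (f.functionFieldMap a) = a :=
  letI := f.functionFieldMap.hom.toAlgebra
  haveI : Module.Finite Y.functionField X.functionField := f.finite_functionFieldMap
  Algebra.normalizedTrace_algebraMap_apply_eq_self _ _ a

theorem exists_algebraMap_eq_normalizedTrace {U : Y.Opens} [Nonempty U] {y : Y} (hy : y ∈ U)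
    [IsIntegrallyClosed (Y.presheaf.stalk y)] [Algebra ℚ (Y.presheaf.stalk y)]
    (b : Γ(X, f ⁻¹ᵁ U)) :
    ∃ c : Y.presheaf.stalk y, algebraMap _ Y.functionField c =
      f.normalizedTrace (X.germToFunctionField (f ⁻¹ᵁ U) b) := by
  let := f.functionFieldMap.hom.toAlgebra
  have : Module.Finite Y.functionField X.functionField := f.finite_functionFieldMap
  let : Algebra (Y.presheaf.stalk y) X.functionField :=
    (f.functionFieldMap.hom.comp (algebraMap (Y.presheaf.stalk y) Y.functionField)).toAlgebra
  have : IsScalarTower (Y.presheaf.stalk y) Y.functionField X.functionField :=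
    .of_algebraMap_eq' rfl
  exact Algebra.exists_algebraMap_eq_normalizedTrace (f.isIntegralElem_germToFunctionField hy b)

end NormalizedTrace

section TraceRetraction

variable [IsIntegral X] [IsIntegral Y] [IsDominant f] [IsFinite f]
  [∀ y : Y, Algebra ℚ (Y.presheaf.stalk y)] [∀ y : Y, IsIntegrallyClosed (Y.presheaf.stalk y)]

attribute [local instance] algebraRat.charZero

theorem exists_germToFunctionField_eq_normalizedTrace (U : Y.Opens) [Nonempty U]
    (b : Γ(X, f ⁻¹ᵁ U)) : ∃ s : Γ(Y, U),
      Y.germToFunctionField U s = f.normalizedTrace (X.germToFunctionField (f ⁻¹ᵁ U) b) :=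
  Y.exists_germToFunctionField_eq_of_forall_mem_range U _ fun _ hy ↦
    f.exists_algebraMap_eq_normalizedTrace hy b

open Classical in
noncomputable def traceRetraction (U : Y.Opens) : Γ(X, f ⁻¹ᵁ U) →+ Γ(Y, U) :=
  if _ : Nonempty U then
    have hs b := (f.exists_germToFunctionField_eq_normalizedTrace U b).choose_spec
    { toFun b := (f.exists_germToFunctionField_eq_normalizedTrace U b).choose
      map_zero' := Y.germToFunctionField_injective U <| (hs 0).trans <| by simp only [map_zero]
      map_add' b b' := Y.germToFunctionField_injective U <| (hs _).trans <| by
        simp only [map_add, hs] }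
  else 0

theorem germToFunctionField_traceRetraction (U : Y.Opens) [h : Nonempty U]
    (b : Γ(X, f ⁻¹ᵁ U)) :
    Y.germToFunctionField U (f.traceRetraction U b) =
      f.normalizedTrace (X.germToFunctionField (f ⁻¹ᵁ U) b) := by
  rw [traceRetraction, dif_pos h]
  exact (f.exists_germToFunctionField_eq_normalizedTrace U b).choose_spec

theorem traceRetraction_app_mul (U : Y.Opens) (a : Γ(Y, U)) (b : Γ(X, f ⁻¹ᵁ U)) :
    f.traceRetraction U (f.app U a * b) = a * f.traceRetraction U b :=
  Y.eq_of_germToFunctionField_eq <| by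
    intro
    simp only [germToFunctionField_traceRetraction, map_mul, germToFunctionField_app,
      normalizedTrace_functionFieldMap_mul]

theorem traceRetraction_app (U : Y.Opens) (a : Γ(Y, U)) : f.traceRetraction U (f.app U a) = a :=
  Y.eq_of_germToFunctionField_eq <| by
    intro
    rw [germToFunctionField_traceRetraction, germToFunctionField_app,
      normalizedTrace_functionFieldMap]

theorem traceRetraction_map {U V : Y.Opens} (i : V ⟶ U) (b : Γ(X, f ⁻¹ᵁ U)) :
    f.traceRetraction V (X.presheaf.map ((Opens.map f.base).map i).op b) =
      Y.presheaf.map i.op (f.traceRetraction U b) :=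
  Y.eq_of_germToFunctionField_eq <| by
    intro
    have : Nonempty U := ⟨⟨_, i.le ‹Nonempty V›.some.2⟩⟩
    rw [germToFunctionField_traceRetraction, germToFunctionField_map, germToFunctionField_map,
      germToFunctionField_traceRetraction]

end TraceRetraction

end Scheme.Hom

end AlgebraicGeometry

theorem exists_trace_retraction_of_finite_surjective_general
    (X Y : Scheme) [IsIntegral X] [IsIntegral Y]
    (sY : Y ⟶ Spec (CommRingCat.of ℂ))
    (f : X ⟶ Y)
    [IsFinite f] [Surjective f]
    (hYnormal : ∀ y : Y, IsIntegrallyClosed (Y.presheaf.stalk y)) :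
    ∃ μ : ∀ U : Y.Opens, (X.presheaf.obj (op (f ⁻¹ᵁ U))) →+ (Y.presheaf.obj (op U)),
      -- `μ` is `O_Y`-linear for the module structure via `f♯`
      (∀ (U : Y.Opens) (a : Y.presheaf.obj (op U)) (b : X.presheaf.obj (op (f ⁻¹ᵁ U))),
          μ U (f.app U a * b) = a * μ U b) ∧
      -- `μ` is a retraction of the natural map `O_Y ⟶ f_* O_X`
      (∀ (U : Y.Opens) (a : Y.presheaf.obj (op U)), μ U (f.app U a) = a) ∧
      -- `μ` is compatible with restriction, i.e. it is a map of sheaves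
      (∀ (U V : Y.Opens) (h : V ≤ U) (b : X.presheaf.obj (op (f ⁻¹ᵁ U))),
          μ V (X.presheaf.map (homOfLE (TopologicalSpace.Opens.map f.base |>.map (homOfLE h)).le).op b) =
            Y.presheaf.map (homOfLE h).op (μ U b)) := by
  let (y : Y) : Algebra ℚ (Y.presheaf.stalk y) :=
    (((Scheme.ΓSpecIso _).inv ≫ sY.appTop ≫ Y.presheaf.germ ⊤ y trivial).hom.comp
      (algebraMap ℚ ℂ)).toAlgebra
  exact ⟨f.traceRetraction, f.traceRetraction_app_mul, f.traceRetraction_app,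
    fun _ _ h ↦ f.traceRetraction_map (homOfLE h)⟩

/-- Let `X` and `Y` be integral schemes of finite type over `ℂ` with `Y`
normal (all stalks of `O_Y` are integrally closed domains), and let `f : X ⟶ Y` be a finite
surjective morphism (over `ℂ`). Then the natural map `O_Y ⟶ f_* O_X` admits an
`O_Y`-module retraction (given by `(1 / deg f) · Trace_{X/Y}`): there is a family of
additive maps `μ U : Γ(X, f⁻¹U) → Γ(Y, U)`, compatible with restriction, which is
`O_Y`-linear (`μ U (f♯ a * b) = a * μ U b`) and satisfies `μ U ∘ f♯ = id`. In particular
`f_* O_X ≅ O_Y ⊕ F` as `O_Y`-modules. -/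
theorem exists_trace_retraction_of_finite_surjective
    (X Y : Scheme) [IsIntegral X] [IsIntegral Y]
    (sX : X ⟶ Spec (CommRingCat.of ℂ)) (sY : Y ⟶ Spec (CommRingCat.of ℂ))
    [LocallyOfFiniteType sX] [LocallyOfFiniteType sY] [QuasiCompact sX] [QuasiCompact sY]
    (f : X ⟶ Y) (hover : f ≫ sY = sX)
    [IsFinite f] [Surjective f]
    (hYnormal : ∀ y : Y, IsIntegrallyClosed (Y.presheaf.stalk y)) :
    ∃ μ : ∀ U : Y.Opens, (X.presheaf.obj (op (f ⁻¹ᵁ U))) →+ (Y.presheaf.obj (op U)),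
      -- `μ` is `O_Y`-linear for the module structure via `f♯`
      (∀ (U : Y.Opens) (a : Y.presheaf.obj (op U)) (b : X.presheaf.obj (op (f ⁻¹ᵁ U))),
          μ U (f.app U a * b) = a * μ U b) ∧
      -- `μ` is a retraction of the natural map `O_Y ⟶ f_* O_X`
      (∀ (U : Y.Opens) (a : Y.presheaf.obj (op U)), μ U (f.app U a) = a) ∧
      -- `μ` is compatible with restriction, i.e. it is a map of sheaves
      (∀ (U V : Y.Opens) (h : V ≤ U) (b : X.presheaf.obj (op (f ⁻¹ᵁ U))),
          μ V (X.presheaf.map (homOfLE (TopologicalSpace.Opens.map f.base |>.map (homOfLE h)).le).op b) =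
            Y.presheaf.map (homOfLE h).op (μ U b)) :=
  exists_trace_retraction_of_finite_surjective_general X Y sY f hYnormal
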